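/- Let ρ be an elliptic N-function. Then (ρ_a)*(t) ∼ (ρ*)_{ρ'(a)}(t) uniformly in a, t ≥ 0, i.e. the conjugate of the shifted N-function is comparable to the conjugate shifted by ρ'(a), with constants depending only on the characteristics of ρ. -/

import Mathlib

open Set Filter

/-- An N-function: strictly increasing and convex on `[0,∞)`, vanishing at `0`,
with `ρ(t)/t → 0` as `t → 0⁺` and `t/ρ(t) → 0` as `t → ∞`. -/
def IsNFunction (ρ : ℝ → ℝ) : Prop :=
  ρ 0 = 0 ∧ StrictMonoOn ρ (Ici 0) ∧ ConvexOn ℝ (Ici 0) ρ ∧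
    Tendsto (fun t => ρ t / t) (nhdsWithin 0 (Ioi 0)) (nhds 0) ∧
    Tendsto (fun t => t / ρ t) atTop (nhds 0)

/-- The conjugate (Young/Legendre) function `ρ*(t) = sup_{s ≥ 0} (s t − ρ s)`. -/
noncomputable def conjN (ρ : ℝ → ℝ) (t : ℝ) : ℝ :=
  sSup {y | ∃ s ≥ 0, y = s * t - ρ s}

/-- The shifted N-function `ρ_a(t) = ∫₀ᵗ ρ'(a+τ)/(a+τ) · τ dτ`. -/
noncomputable def shiftN (ρ : ℝ → ℝ) (a : ℝ) (t : ℝ) : ℝ :=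
  ∫ τ in (0:ℝ)..t, deriv ρ (a + τ) / (a + τ) * τ

/-- An elliptic N-function with characteristics `c₁, c₂`: `C¹` on `[0,∞)`,
`C²` on `(0,∞)`, and `ρ'(t) ∼ t ρ''(t)` uniformly in `t > 0`. -/
def IsElliptic (ρ : ℝ → ℝ) (c₁ c₂ : ℝ) : Prop :=
  ContDiffOn ℝ 1 ρ (Ici 0) ∧ ContDiffOn ℝ 2 ρ (Ioi 0) ∧
    ∀ t > 0, c₁ * deriv ρ t ≤ t * deriv (deriv ρ) t ∧
      t * deriv (deriv ρ) t ≤ c₂ * deriv ρ t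

/-!
With `b = ρ'(a)`, both shifted functions are primitives of monotone densities vanishing at `0`:
`ρ_a = ∫₀ q` for `q(τ) = ρ'(a+τ) τ/(a+τ)`, and, since `(ρ*)' = (ρ')⁻¹` (a continuous
subgradient of `ρ*`), `(ρ*)_b = ∫₀ J` for `J(τ) = (ρ')⁻¹(b+τ) τ/(b+τ)`. For `F = ∫₀ f` one has
`F*(f σ) = σ f σ - F σ`, so `F*(t)` lies between `(t/2) f⁻¹(t/2)` and `t f⁻¹(t)`, just as `∫₀ᵗ J`
lies between `(t/2) J(t/2)` and `t J(t)`. It therefore suffices that `J` is doubling and that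
`J (q s)` is comparable to `s`. Ellipticity gives `k^c₁ ρ'(x) ≤ ρ'(k x) ≤ k^c₂ ρ'(x)` for `k ≥ 1`.
If `s ≥ a`, then `q(s)` and `b + q(s)` are comparable to `ρ'(a+s)`, so `J (q s)` is comparable to
`(ρ')⁻¹(ρ'(a+s)) = a + s`, hence to `s`. If `s ≤ a`, then `ρ'(a+s)` is comparable to `b`, so
`q(s)` is comparable to `b s / a` and `J (q s)` to `a q(s) / b`, hence to `s`.
-/

def HasSubgradientOnIci (F f : ℝ → ℝ) : Prop :=
  ∀ σ ≥ (0:ℝ), ∀ s ≥ (0:ℝ), F σ + (s - σ) * f σ ≤ F s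

namespace HasSubgradientOnIci

variable {F f : ℝ → ℝ}

lemma congr {G : ℝ → ℝ} (hF : HasSubgradientOnIci F f) (h : EqOn F G (Ici 0)) :
    HasSubgradientOnIci G f := by
  intro σ hσ s hs
  rw [← h (mem_Ici.2 hσ), ← h (mem_Ici.2 hs)]
  exact hF σ hσ s hs

lemma nonneg (hF : HasSubgradientOnIci F f) (hF0 : F 0 = 0) (hf0 : f 0 = 0) {s : ℝ}
    (hs : 0 ≤ s) : 0 ≤ F s := by
  simpa [hF0, hf0] using hF 0 le_rfl s hs

lemma le_mul_apply (hF : HasSubgradientOnIci F f) (hF0 : F 0 = 0) {s : ℝ} (hs : 0 ≤ s) :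
    F s ≤ s * f s := by
  have := hF s hs 0 le_rfl
  rw [hF0] at this
  linarith

lemma half_mul_apply_half_le (hF : HasSubgradientOnIci F f) (hF0 : F 0 = 0) (hf0 : f 0 = 0)
    {t : ℝ} (ht : 0 ≤ t) : t / 2 * f (t / 2) ≤ F t := by
  have h := hF (t / 2) (by linarith) t ht
  have := hF.nonneg hF0 hf0 (by linarith : 0 ≤ t / 2)
  linarith

lemma conjN_apply (hF : HasSubgradientOnIci F f) {σ : ℝ} (hσ : 0 ≤ σ) :
    conjN F (f σ) = σ * f σ - F σ := by
  refine IsGreatest.csSup_eq ⟨⟨σ, hσ, rfl⟩, ?_⟩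
  rintro y ⟨s, hs, rfl⟩
  linarith [hF σ hσ s hs]

lemma sub_le_conjN (hF : HasSubgradientOnIci F f) {σ s : ℝ} (hσ : 0 ≤ σ) (hs : 0 ≤ s) :
    s * f σ - F s ≤ conjN F (f σ) := by
  rw [hF.conjN_apply hσ]
  linarith [hF σ hσ s hs]

lemma conjN_of_rightInvOn {g : ℝ → ℝ} (hF : HasSubgradientOnIci F f)
    (hg : MapsTo g (Ici 0) (Ici 0)) (hfg : RightInvOn g f (Ici 0)) :
    HasSubgradientOnIci (conjN F) g := by
  intro u hu v hv
  have hgu : 0 ≤ g u := hg (mem_Ici.2 hu)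
  have hfgu : f (g u) = u := hfg (mem_Ici.2 hu)
  have h := hF.sub_le_conjN (hg (mem_Ici.2 hv)) hgu
  rw [hfg (mem_Ici.2 hv)] at h
  nth_rewrite 1 [← hfgu]
  rw [hF.conjN_apply hgu, hfgu]
  linarith

lemma hasDerivAt (hF : HasSubgradientOnIci F f) {u : ℝ} (hu : 0 < u) (hf : ContinuousAt f u) :
    HasDerivAt F (f u) u := by
  rw [hasDerivAt_iff_tendsto_slope, tendsto_iff_norm_sub_tendsto_zero]
  refine squeeze_zero' (Eventually.of_forall fun _ => norm_nonneg _) ?_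
    (tendsto_iff_norm_sub_tendsto_zero.1 (hf.tendsto.mono_left nhdsWithin_le_nhds))
  filter_upwards [self_mem_nhdsWithin, nhdsWithin_le_nhds (Ioi_mem_nhds hu)] with v hvu hv
  have hv0 : (0:ℝ) ≤ v := le_of_lt hv
  have h₁ := hF u hu.le v hv0
  have h₂ := hF v hv0 u hu.le
  -- the slope of `F` between `u` and `v` lies between `f u` and `f v`
  simp only [Real.norm_eq_abs, slope_def_field]
  rcases lt_or_gt_of_ne (show v ≠ u from hvu) with hlt | hgt
  · have hneg : v - u < 0 := by linarith
    apply abs_le_abs_of_nonpos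
    · rw [sub_nonpos, div_le_iff_of_neg hneg]; linarith
    · rw [sub_le_sub_iff_right, le_div_iff_of_neg hneg]; linarith
  · have hpos : 0 < v - u := by linarith
    apply abs_le_abs_of_nonneg
    · rw [sub_nonneg, le_div_iff₀ hpos]; linarith
    · rw [sub_le_sub_iff_right, div_le_iff₀ hpos]; linarith

end HasSubgradientOnIci

lemma hasSubgradientOnIci_integral {f : ℝ → ℝ} (hf : MonotoneOn f (Ici 0)) :
    HasSubgradientOnIci (fun s => ∫ τ in (0:ℝ)..s, f τ) f := by
  have hint : ∀ x y : ℝ, 0 ≤ x → 0 ≤ y → IntervalIntegrable f MeasureTheory.volume x y :=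
    fun x y hx hy => (hf.mono fun z hz => le_trans (le_min hx hy) hz.1).intervalIntegrable
  intro σ hσ s hs
  suffices (s - σ) * f σ ≤ ∫ τ in σ..s, f τ by
    rw [← intervalIntegral.integral_interval_sub_left (hint 0 s le_rfl hs)
      (hint 0 σ le_rfl hσ)] at this
    linarith
  rcases le_total σ s with hσs | hsσ
  · have := intervalIntegral.integral_mono_on hσs intervalIntegrable_const (hint σ s hσ hs)
      fun x hx => hf hσ (hσ.trans hx.1) hx.1
    simpa using this
  · have := intervalIntegral.integral_mono_on hsσ (hint s σ hs hσ) intervalIntegrable_const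
      fun x hx => hf (hs.trans hx.1) hσ hx.2
    rw [intervalIntegral.integral_symm]
    simp only [intervalIntegral.integral_const, smul_eq_mul] at this
    linarith

lemma HasSubgradientOnIci.conjN_comparable {F f G g : ℝ → ℝ} {D K : ℝ}
    (hF : HasSubgradientOnIci F f) (hF0 : F 0 = 0) (hf0 : f 0 = 0)
    (hf : SurjOn f (Ici 0) (Ici 0)) (hG : HasSubgradientOnIci G g) (hG0 : G 0 = 0)
    (hg0 : g 0 = 0) (hD0 : 0 ≤ D) (hD : ∀ t > 0, g t ≤ D * g (t / 2)) (hK0 : 0 ≤ K)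
    (hK : ∀ s > 0, s ≤ K * g (f s) ∧ g (f s) ≤ K * s) {t : ℝ} (ht : 0 ≤ t) :
    conjN F t ≤ 2 * D * K * G t ∧ G t ≤ 2 * D * K * conjN F t := by
  have hpreimage : ∀ {t : ℝ}, 0 < t → ∃ σ > 0, f σ = t := fun {t} ht => by
    obtain ⟨σ, hσ, hσt⟩ := hf (mem_Ici.2 ht.le)
    refine ⟨σ, (mem_Ici.1 hσ).lt_of_ne ?_, hσt⟩
    rintro rfl
    exact ht.ne' (hσt ▸ hf0)
  rcases ht.eq_or_lt with rfl | ht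
  · have h := hF.conjN_apply le_rfl
    rw [hf0, hF0] at h
    simp [h, hG0]
  obtain ⟨σ, hσ, rfl⟩ := hpreimage ht
  obtain ⟨s₀, hs₀, hfs₀⟩ := hpreimage (half_pos ht)
  constructor
  · calc conjN F (f σ) = σ * f σ - F σ := hF.conjN_apply hσ.le
      _ ≤ σ * f σ := by linarith [hF.nonneg hF0 hf0 hσ.le]
      _ ≤ K * g (f σ) * f σ := by gcongr; exact (hK σ hσ).1
      _ ≤ K * (D * g (f σ / 2)) * f σ := by gcongr; exact hD _ ht
      _ = 2 * D * K * (f σ / 2 * g (f σ / 2)) := by ring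
      _ ≤ 2 * D * K * G (f σ) := by gcongr; exact hG.half_mul_apply_half_le hG0 hg0 ht.le
  · have hconj : s₀ * (f σ / 2) ≤ conjN F (f σ) := by
      have := hF.sub_le_conjN hσ.le hs₀.le
      have := hF.le_mul_apply hF0 hs₀.le
      rw [hfs₀] at this
      linarith
    calc G (f σ) ≤ f σ * g (f σ) := hG.le_mul_apply hG0 ht.le
      _ ≤ f σ * (D * g (f σ / 2)) := by gcongr; exact hD _ ht
      _ ≤ f σ * (D * (K * s₀)) := by gcongr; simpa [hfs₀] using (hK s₀ hs₀).2
      _ = 2 * D * K * (s₀ * (f σ / 2)) := by ring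
      _ ≤ 2 * D * K * conjN F (f σ) := by gcongr

lemma monotoneOn_div_rpow_of_le_mul_deriv {φ φ' : ℝ → ℝ} {c : ℝ}
    (hφ : ∀ z > 0, HasDerivAt φ (φ' z) z) (h : ∀ z > 0, c * φ z ≤ z * φ' z) :
    MonotoneOn (fun z => φ z / z ^ c) (Ioi 0) := by
  have hderiv : ∀ z > (0:ℝ), HasDerivAt (fun z => φ z / z ^ c)
      ((φ' z * z ^ c - φ z * (c * z ^ (c - 1))) / (z ^ c) ^ 2) z := fun z hz =>
    (hφ z hz).div (Real.hasDerivAt_rpow_const (Or.inl hz.ne')) (Real.rpow_pos_of_pos hz c).ne'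
  refine monotoneOn_of_hasDerivWithinAt_nonneg (convex_Ioi 0)
    (fun z hz => (hderiv z hz).continuousAt.continuousWithinAt)
    (fun z hz => (hderiv z (interior_subset hz : 0 < z)).hasDerivWithinAt) fun z hz => ?_
  rw [interior_Ioi] at hz
  have hz : (0:ℝ) < z := hz
  have hzc : 0 < z ^ c := Real.rpow_pos_of_pos hz c
  have hnum : φ' z * z ^ c - φ z * (c * z ^ (c - 1)) = (z * φ' z - c * φ z) * (z ^ c / z) := by
    rw [Real.rpow_sub_one hz.ne']
    field_simp
  rw [hnum]
  have := h z hz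
  positivity

lemma antitoneOn_div_rpow_of_mul_deriv_le {φ φ' : ℝ → ℝ} {c : ℝ}
    (hφ : ∀ z > 0, HasDerivAt φ (φ' z) z) (h : ∀ z > 0, z * φ' z ≤ c * φ z) :
    AntitoneOn (fun z => φ z / z ^ c) (Ioi 0) := by
  have hneg := monotoneOn_div_rpow_of_le_mul_deriv (φ := -φ) (φ' := -φ') (c := c)
    (fun z hz => (hφ z hz).neg) fun z hz => by
      simp only [Pi.neg_apply, mul_neg, neg_le_neg_iff]
      exact h z hz
  intro x hx y hy hxy
  have := hneg hx hy hxy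
  simp only [Pi.neg_apply, neg_div, neg_le_neg_iff] at this
  exact this

-- `ρ` is unconstrained on `(-∞, 0)`: the two-sided `deriv ρ 0` is the right slope `0` when it
-- exists, and the junk value `0` otherwise.
lemma IsNFunction.deriv_zero {ρ : ℝ → ℝ} (hN : IsNFunction ρ) : deriv ρ 0 = 0 := by
  by_cases hd : DifferentiableAt ℝ ρ 0
  · have h := hd.hasDerivAt.tendsto_slope_zero_right
    refine tendsto_nhds_unique h (hN.2.2.2.1.congr' ?_)
    filter_upwards [self_mem_nhdsWithin] with t _
    simp [hN.1, div_eq_inv_mul]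
  · exact deriv_zero_of_not_differentiableAt hd

noncomputable def derivInv (ρ : ℝ → ℝ) : ℝ → ℝ := Function.invFunOn (deriv ρ) (Ici 0)

noncomputable def shiftDensity (g : ℝ → ℝ) (a τ : ℝ) : ℝ := g (a + τ) / (a + τ) * τ

section shiftDensity

variable {g : ℝ → ℝ} {a : ℝ}

@[simp]
lemma shiftDensity_apply_zero : shiftDensity g a 0 = 0 := by simp [shiftDensity]

lemma shiftDensity_eq_mul_div {τ : ℝ} : shiftDensity g a τ = g (a + τ) * (τ / (a + τ)) := by
  rw [shiftDensity, div_mul_eq_mul_div, mul_div_assoc]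

lemma monotoneOn_shiftDensity (hg : MonotoneOn g (Ici 0)) (hg0 : g 0 = 0) (ha : 0 ≤ a) :
    MonotoneOn (shiftDensity g a) (Ici 0) := by
  intro x hx y hy hxy
  have hx : (0:ℝ) ≤ x := hx
  have hy : (0:ℝ) ≤ y := hy
  have hgy : 0 ≤ g (a + y) := hg0 ▸ hg (mem_Ici.2 le_rfl) (mem_Ici.2 (by linarith)) (by linarith)
  rcases hx.eq_or_lt with rfl | hx
  · rw [shiftDensity_apply_zero, shiftDensity_eq_mul_div]
    positivity
  rw [shiftDensity_eq_mul_div, shiftDensity_eq_mul_div]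
  refine mul_le_mul (hg (mem_Ici.2 (by linarith)) (mem_Ici.2 (by linarith)) (by linarith)) ?_
    (by positivity) hgy
  rw [div_le_div_iff₀ (by linarith) (by linarith)]
  nlinarith

lemma continuousOn_shiftDensity (hg : ContinuousOn g (Ici 0)) (hg0 : g 0 = 0) (ha : 0 ≤ a) :
    ContinuousOn (shiftDensity g a) (Ici 0) := by
  rcases ha.eq_or_lt with rfl | ha
  · refine hg.congr fun τ hτ => ?_
    rcases (mem_Ici.1 hτ).eq_or_lt with rfl | hτ
    · simp [hg0]
    · simp [shiftDensity, hτ.ne']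
  · refine ContinuousOn.mul (ContinuousOn.div (hg.comp (by fun_prop) fun τ hτ => ?_)
      (by fun_prop) fun τ hτ => ?_) continuousOn_id
    · exact mem_Ici.2 (by linarith [mem_Ici.1 hτ])
    · linarith [mem_Ici.1 hτ]

lemma tendsto_shiftDensity_atTop (hg : MonotoneOn g (Ici 0)) (htop : Tendsto g atTop atTop)
    (ha : 0 ≤ a) : Tendsto (shiftDensity g a) atTop atTop := by
  refine tendsto_atTop_mono' _ ?_ (htop.atTop_div_const two_pos)
  filter_upwards [eventually_ge_atTop (max a 1), htop.eventually_ge_atTop 0] with τ hτ hgτ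
  have hτa : a ≤ τ := le_of_max_le_left hτ
  have hτ1 : 1 ≤ τ := le_of_max_le_right hτ
  rw [shiftDensity_eq_mul_div, div_eq_mul_one_div]
  refine mul_le_mul (hg (mem_Ici.2 (by linarith)) (mem_Ici.2 (by linarith)) (by linarith)) ?_
    (by norm_num) (hgτ.trans (hg (mem_Ici.2 (by linarith)) (mem_Ici.2 (by linarith))
      (by linarith)))
  rw [div_le_div_iff₀ two_pos (by linarith)]
  linarith

lemma surjOn_shiftDensity (hg : MonotoneOn g (Ici 0)) (hgc : ContinuousOn g (Ici 0))
    (hg0 : g 0 = 0) (htop : Tendsto g atTop atTop) (ha : 0 ≤ a) :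
    SurjOn (shiftDensity g a) (Ici 0) (Ici 0) := by
  simpa [SurjOn] using intermediate_value_Ici (continuousOn_shiftDensity hgc hg0 ha)
    (tendsto_shiftDensity_atTop hg htop ha)

end shiftDensity

@[simp]
lemma shiftN_apply_zero (ρ : ℝ → ℝ) (a : ℝ) : shiftN ρ a 0 = 0 :=
  intervalIntegral.integral_same

namespace IsElliptic

variable {ρ : ℝ → ℝ} {c₁ c₂ : ℝ}

lemma hasDerivAt (hE : IsElliptic ρ c₁ c₂) {x : ℝ} (hx : 0 < x) :
    HasDerivAt ρ (deriv ρ x) x :=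
  ((hE.2.1.differentiableOn (by norm_num) x hx).differentiableAt
    (Ioi_mem_nhds hx)).hasDerivAt

lemma contDiffOn_deriv (hE : IsElliptic ρ c₁ c₂) : ContDiffOn ℝ 1 (deriv ρ) (Ioi 0) :=
  ((contDiffOn_succ_iff_deriv_of_isOpen isOpen_Ioi).1 (by exact_mod_cast hE.2.1)).2.2

lemma hasDerivAt_deriv (hE : IsElliptic ρ c₁ c₂) {x : ℝ} (hx : 0 < x) :
    HasDerivAt (deriv ρ) (deriv (deriv ρ) x) x :=
  ((hE.contDiffOn_deriv.differentiableOn one_ne_zero x hx).differentiableAt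
    (Ioi_mem_nhds hx)).hasDerivAt

lemma rpow_mul_deriv_le (hE : IsElliptic ρ c₁ c₂) {x k : ℝ} (hx : 0 < x) (hk : 1 ≤ k) :
    k ^ c₁ * deriv ρ x ≤ deriv ρ (k * x) := by
  have hkx : 0 < k * x := by positivity
  have h := monotoneOn_div_rpow_of_le_mul_deriv (fun z hz => hE.hasDerivAt_deriv hz)
    (fun z hz => (hE.2.2 z hz).1) (mem_Ioi.2 hx) (mem_Ioi.2 hkx)
    (le_mul_of_one_le_left hx.le hk)
  dsimp only at h
  rw [Real.mul_rpow (by linarith) hx.le, div_le_div_iff₀ (Real.rpow_pos_of_pos hx _)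
    (by positivity)] at h
  nlinarith [Real.rpow_pos_of_pos hx c₁]

lemma deriv_mul_le_rpow_mul (hE : IsElliptic ρ c₁ c₂) {x k : ℝ} (hx : 0 < x) (hk : 1 ≤ k) :
    deriv ρ (k * x) ≤ k ^ c₂ * deriv ρ x := by
  have hkx : 0 < k * x := by positivity
  have h := antitoneOn_div_rpow_of_mul_deriv_le (fun z hz => hE.hasDerivAt_deriv hz)
    (fun z hz => (hE.2.2 z hz).2) (mem_Ioi.2 hx) (mem_Ioi.2 hkx)
    (le_mul_of_one_le_left hx.le hk)
  dsimp only at h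
  rw [Real.mul_rpow (by linarith) hx.le, div_le_div_iff₀ (by positivity)
    (Real.rpow_pos_of_pos hx _)] at h
  nlinarith [Real.rpow_pos_of_pos hx c₂]

lemma deriv_pos (hE : IsElliptic ρ c₁ c₂) (hN : IsNFunction ρ) {x : ℝ} (hx : 0 < x) :
    0 < deriv ρ x := by
  obtain ⟨ζ, hζ, hζslope⟩ := exists_hasDerivAt_eq_slope ρ (deriv ρ) (half_lt_self hx)
    (hE.1.continuousOn.mono fun y hy => (half_pos hx).le.trans hy.1)
    fun y hy => hE.hasDerivAt ((half_pos hx).trans hy.1)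
  have hζ0 : 0 < ζ := (half_pos hx).trans hζ.1
  have hζpos : 0 < deriv ρ ζ := by
    rw [hζslope]
    exact div_pos (sub_pos.2 (hN.2.1 (mem_Ici.2 (half_pos hx).le) (mem_Ici.2 hx.le)
      (half_lt_self hx))) (by linarith)
  have h := hE.rpow_mul_deriv_le hζ0 ((one_le_div hζ0).2 hζ.2.le)
  rw [div_mul_cancel₀ x hζ0.ne'] at h
  exact lt_of_lt_of_le (mul_pos (Real.rpow_pos_of_pos (div_pos hx hζ0) _) hζpos) h

lemma strictMonoOn_deriv (hE : IsElliptic ρ c₁ c₂) (hN : IsNFunction ρ) (hc₁ : 0 < c₁) :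
    StrictMonoOn (deriv ρ) (Ici 0) := by
  intro x hx y hy hxy
  rcases (mem_Ici.1 hx).eq_or_lt with rfl | hx
  · rw [hN.deriv_zero]
    exact hE.deriv_pos hN hxy
  have h := hE.rpow_mul_deriv_le hx ((one_le_div hx).2 hxy.le)
  rw [div_mul_cancel₀ y hx.ne'] at h
  have hk : 1 < (y / x) ^ c₁ := Real.one_lt_rpow ((one_lt_div hx).2 hxy) hc₁
  nlinarith [hE.deriv_pos hN hx]

lemma deriv_nonneg (hE : IsElliptic ρ c₁ c₂) (hN : IsNFunction ρ) (hc₁ : 0 < c₁) {x : ℝ}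
    (hx : 0 ≤ x) : 0 ≤ deriv ρ x :=
  hN.deriv_zero ▸ (hE.strictMonoOn_deriv hN hc₁).monotoneOn (mem_Ici.2 le_rfl) (mem_Ici.2 hx) hx

lemma continuousOn_deriv (hE : IsElliptic ρ c₁ c₂) (hN : IsNFunction ρ) (hc₁ : 0 < c₁) :
    ContinuousOn (deriv ρ) (Ici 0) := by
  intro x hx
  rcases (mem_Ici.1 hx).eq_or_lt with rfl | hx
  · rw [← continuousWithinAt_Ioi_iff_Ici, ContinuousWithinAt, hN.deriv_zero]
    have hrpow : Tendsto (fun x : ℝ => x ^ c₁ * deriv ρ 1) (nhdsWithin 0 (Ioi 0)) (nhds 0) := by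
      have := ((Real.continuousAt_rpow_const 0 c₁ (Or.inr hc₁.le)).tendsto.mul_const
        (deriv ρ 1)).mono_left (nhdsWithin_le_nhds (s := Ioi 0))
      rwa [Real.zero_rpow hc₁.ne', zero_mul] at this
    refine tendsto_of_tendsto_of_tendsto_of_le_of_le' tendsto_const_nhds hrpow ?_ ?_
    · filter_upwards [self_mem_nhdsWithin] with x hx
      exact (hE.deriv_pos hN hx).le
    · filter_upwards [Ioo_mem_nhdsGT one_pos] with x hx
      have h := hE.rpow_mul_deriv_le hx.1 (one_le_one_div hx.1 hx.2.le)
      rw [one_div_mul_cancel hx.1.ne', Real.div_rpow zero_le_one hx.1.le, Real.one_rpow,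
        one_div_mul_eq_div, div_le_iff₀ (Real.rpow_pos_of_pos hx.1 _)] at h
      linarith
  · exact (hE.contDiffOn_deriv.continuousOn.continuousAt (Ioi_mem_nhds hx)).continuousWithinAt

lemma tendsto_deriv_atTop (hE : IsElliptic ρ c₁ c₂) (hN : IsNFunction ρ) (hc₁ : 0 < c₁) :
    Tendsto (deriv ρ) atTop atTop := by
  refine tendsto_atTop_mono' _ ?_
    ((tendsto_rpow_atTop hc₁).atTop_mul_const (hE.deriv_pos hN one_pos))
  filter_upwards [eventually_ge_atTop 1] with x hx
  simpa using hE.rpow_mul_deriv_le one_pos hx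

lemma surjOn_deriv (hE : IsElliptic ρ c₁ c₂) (hN : IsNFunction ρ) (hc₁ : 0 < c₁) :
    SurjOn (deriv ρ) (Ici 0) (Ici 0) := by
  have := intermediate_value_Ici (hE.continuousOn_deriv hN hc₁) (hE.tendsto_deriv_atTop hN hc₁)
  rwa [hN.deriv_zero] at this

lemma integral_deriv (hE : IsElliptic ρ c₁ c₂) (hN : IsNFunction ρ) (hc₁ : 0 < c₁) {s : ℝ}
    (hs : 0 ≤ s) : ∫ τ in (0:ℝ)..s, deriv ρ τ = ρ s := by
  rw [intervalIntegral.integral_eq_sub_of_hasDeriv_right_of_le hs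
    (hE.1.continuousOn.mono Icc_subset_Ici_self)
    (fun x hx => (hE.hasDerivAt hx.1).hasDerivWithinAt)
    (((hE.continuousOn_deriv hN hc₁).mono Icc_subset_Ici_self).intervalIntegrable_of_Icc hs),
    hN.1, sub_zero]

lemma hasSubgradientOnIci (hE : IsElliptic ρ c₁ c₂) (hN : IsNFunction ρ) (hc₁ : 0 < c₁) :
    HasSubgradientOnIci ρ (deriv ρ) :=
  (hasSubgradientOnIci_integral (hE.strictMonoOn_deriv hN hc₁).monotoneOn).congr
    fun _ hs => hE.integral_deriv hN hc₁ hs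

lemma mapsTo_derivInv (hE : IsElliptic ρ c₁ c₂) (hN : IsNFunction ρ) (hc₁ : 0 < c₁) :
    MapsTo (derivInv ρ) (Ici 0) (Ici 0) :=
  (hE.surjOn_deriv hN hc₁).mapsTo_invFunOn

lemma rightInvOn_derivInv (hE : IsElliptic ρ c₁ c₂) (hN : IsNFunction ρ) (hc₁ : 0 < c₁) :
    RightInvOn (derivInv ρ) (deriv ρ) (Ici 0) :=
  (hE.surjOn_deriv hN hc₁).rightInvOn_invFunOn

lemma leftInvOn_derivInv (hE : IsElliptic ρ c₁ c₂) (hN : IsNFunction ρ) (hc₁ : 0 < c₁) :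
    LeftInvOn (derivInv ρ) (deriv ρ) (Ici 0) :=
  (hE.strictMonoOn_deriv hN hc₁).injOn.leftInvOn_invFunOn

lemma derivInv_zero (hE : IsElliptic ρ c₁ c₂) (hN : IsNFunction ρ) (hc₁ : 0 < c₁) :
    derivInv ρ 0 = 0 := by
  simpa [hN.deriv_zero] using hE.leftInvOn_derivInv hN hc₁ (mem_Ici.2 le_rfl)

lemma monotoneOn_derivInv (hE : IsElliptic ρ c₁ c₂) (hN : IsNFunction ρ) (hc₁ : 0 < c₁) :
    MonotoneOn (derivInv ρ) (Ici 0) := by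
  intro u hu v hv huv
  rwa [← (hE.strictMonoOn_deriv hN hc₁).le_iff_le (hE.mapsTo_derivInv hN hc₁ hu)
    (hE.mapsTo_derivInv hN hc₁ hv), hE.rightInvOn_derivInv hN hc₁ hu,
    hE.rightInvOn_derivInv hN hc₁ hv]

lemma derivInv_pos (hE : IsElliptic ρ c₁ c₂) (hN : IsNFunction ρ) (hc₁ : 0 < c₁) {u : ℝ}
    (hu : 0 < u) : 0 < derivInv ρ u := by
  refine (hE.mapsTo_derivInv hN hc₁ (mem_Ici.2 hu.le)).lt_of_ne fun h => hu.ne ?_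
  rw [← hE.rightInvOn_derivInv hN hc₁ (mem_Ici.2 hu.le), ← h, hN.deriv_zero]

lemma continuousAt_derivInv (hE : IsElliptic ρ c₁ c₂) (hN : IsNFunction ρ) (hc₁ : 0 < c₁)
    {u : ℝ} (hu : 0 < u) : ContinuousAt (derivInv ρ) u := by
  refine continuousAt_of_monotoneOn_of_image_mem_nhds
    ((hE.monotoneOn_derivInv hN hc₁).mono Ioi_subset_Ici_self) (Ioi_mem_nhds hu)
    (mem_of_superset (Ioi_mem_nhds (hE.derivInv_pos hN hc₁ hu)) fun x hx => ?_)
  have hx : (0:ℝ) < x := hx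
  exact ⟨deriv ρ x, hE.deriv_pos hN hx, hE.leftInvOn_derivInv hN hc₁ (mem_Ici.2 hx.le)⟩

lemma derivInv_le_rpow_mul (hE : IsElliptic ρ c₁ c₂) (hN : IsNFunction ρ) (hc₁ : 0 < c₁)
    {w w' k : ℝ} (hw : 0 ≤ w) (hw' : 0 < w') (hk : 1 ≤ k) (hww' : w ≤ k * w') :
    derivInv ρ w ≤ k ^ (1 / c₁) * derivInv ρ w' := by
  set y := k ^ (1 / c₁) * derivInv ρ w'
  have hy : 0 ≤ y := by have := hE.derivInv_pos hN hc₁ hw'; positivity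
  have hwy : w ≤ deriv ρ y := by
    have h := hE.rpow_mul_deriv_le (hE.derivInv_pos hN hc₁ hw')
      (Real.one_le_rpow hk (by positivity) : 1 ≤ k ^ (1 / c₁))
    rw [← Real.rpow_mul (by linarith), one_div_mul_cancel hc₁.ne', Real.rpow_one,
      hE.rightInvOn_derivInv hN hc₁ (mem_Ici.2 hw'.le)] at h
    exact hww'.trans h
  calc derivInv ρ w ≤ derivInv ρ (deriv ρ y) :=
        hE.monotoneOn_derivInv hN hc₁ (mem_Ici.2 hw) (mem_Ici.2 (hw.trans hwy)) hwy
    _ = y := hE.leftInvOn_derivInv hN hc₁ (mem_Ici.2 hy)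

lemma hasDerivAt_conjN (hE : IsElliptic ρ c₁ c₂) (hN : IsNFunction ρ) (hc₁ : 0 < c₁)
    {u : ℝ} (hu : 0 < u) : HasDerivAt (conjN ρ) (derivInv ρ u) u :=
  ((hE.hasSubgradientOnIci hN hc₁).conjN_of_rightInvOn (hE.mapsTo_derivInv hN hc₁)
    (hE.rightInvOn_derivInv hN hc₁)).hasDerivAt hu (hE.continuousAt_derivInv hN hc₁ hu)

lemma hasSubgradientOnIci_shiftN (hE : IsElliptic ρ c₁ c₂) (hN : IsNFunction ρ) (hc₁ : 0 < c₁)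
    {a : ℝ} (ha : 0 ≤ a) : HasSubgradientOnIci (shiftN ρ a) (shiftDensity (deriv ρ) a) :=
  hasSubgradientOnIci_integral
    (monotoneOn_shiftDensity (hE.strictMonoOn_deriv hN hc₁).monotoneOn hN.deriv_zero ha)

lemma hasSubgradientOnIci_shiftN_conjN (hE : IsElliptic ρ c₁ c₂) (hN : IsNFunction ρ)
    (hc₁ : 0 < c₁) {b : ℝ} (hb : 0 ≤ b) :
    HasSubgradientOnIci (shiftN (conjN ρ) b) (shiftDensity (derivInv ρ) b) := by
  refine (hasSubgradientOnIci_integral (monotoneOn_shiftDensity (hE.monotoneOn_derivInv hN hc₁)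
    (hE.derivInv_zero hN hc₁) hb)).congr fun t ht => intervalIntegral.integral_congr
      fun τ hτ => ?_
  rw [uIcc_of_le (mem_Ici.1 ht)] at hτ
  rcases hτ.1.eq_or_lt with rfl | hτ
  · simp
  · simp only [shiftDensity, (hE.hasDerivAt_conjN hN hc₁ (by linarith : 0 < b + τ)).deriv]

lemma shiftDensity_derivInv_le (hE : IsElliptic ρ c₁ c₂) (hN : IsNFunction ρ) (hc₁ : 0 < c₁)
    {b t : ℝ} (hb : 0 ≤ b) (ht : 0 < t) :
    shiftDensity (derivInv ρ) b t ≤ 2 * 2 ^ (1 / c₁) * shiftDensity (derivInv ρ) b (t / 2) := by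
  have hψ := hE.derivInv_le_rpow_mul hN hc₁ (by linarith : 0 ≤ b + t)
    (by linarith : 0 < b + t / 2) one_le_two (by linarith)
  have hfrac : t / (b + t) ≤ 2 * (t / 2 / (b + t / 2)) := by
    rw [mul_div_assoc', mul_div_cancel₀ t two_ne_zero]
    exact div_le_div_of_nonneg_left ht.le (by linarith) (by linarith)
  rw [shiftDensity_eq_mul_div, shiftDensity_eq_mul_div]
  calc derivInv ρ (b + t) * (t / (b + t))
      ≤ 2 ^ (1 / c₁) * derivInv ρ (b + t / 2) * (2 * (t / 2 / (b + t / 2))) :=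
        mul_le_mul hψ hfrac (by positivity) (by
          have := hE.derivInv_pos hN hc₁ (by linarith : 0 < b + t / 2); positivity)
    _ = 2 * 2 ^ (1 / c₁) * (derivInv ρ (b + t / 2) * (t / 2 / (b + t / 2))) := by ring

lemma shiftDensity_derivInv_comparable_of_le (hE : IsElliptic ρ c₁ c₂) (hN : IsNFunction ρ)
    (hc₁ : 0 < c₁) (hc₂ : 0 < c₂) {a s : ℝ} (ha : 0 ≤ a) (hs : 0 < s) (has : a ≤ s) :
    s ≤ 4 * (1 + 2 ^ c₂) ^ (1 / c₁) *
        shiftDensity (derivInv ρ) (deriv ρ a) (shiftDensity (deriv ρ) a s) ∧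
      shiftDensity (derivInv ρ) (deriv ρ a) (shiftDensity (deriv ρ) a s) ≤
        2 * (1 + 2 ^ c₂) ^ (1 / c₁) * s := by
  have hκ : 2 ≤ 1 + (2:ℝ) ^ c₂ := by linarith [Real.one_le_rpow one_le_two hc₂.le]
  have hu : 0 < a + s := by linarith
  have hv : 0 < deriv ρ (a + s) := hE.deriv_pos hN hu
  have hb : 0 ≤ deriv ρ a := hE.deriv_nonneg hN hc₁ ha
  have hbv : deriv ρ a ≤ deriv ρ (a + s) :=
    (hE.strictMonoOn_deriv hN hc₁).monotoneOn (mem_Ici.2 ha) (mem_Ici.2 hu.le) (by linarith)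
  have ht : shiftDensity (deriv ρ) a s * (a + s) = deriv ρ (a + s) * s := by
    rw [shiftDensity]; field_simp
  have hψv : derivInv ρ (deriv ρ (a + s)) = a + s :=
    hE.leftInvOn_derivInv hN hc₁ (mem_Ici.2 hu.le)
  set u := a + s
  set v := deriv ρ u
  set b := deriv ρ a
  set t := shiftDensity (deriv ρ) a s
  have htv : t ≤ v := by nlinarith
  have hvt : v ≤ 2 * t := by nlinarith
  have hm0 : 0 ≤ derivInv ρ (b + t) := hE.mapsTo_derivInv hN hc₁ (mem_Ici.2 (by linarith))
  have hmu : derivInv ρ (b + t) ≤ (1 + 2 ^ c₂) ^ (1 / c₁) * u := by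
    have := hE.derivInv_le_rpow_mul hN hc₁ (w := b + t) (k := 1 + 2 ^ c₂) (by linarith) hv
      (by linarith) (by nlinarith)
    rwa [hψv] at this
  have hum : u ≤ (1 + 2 ^ c₂) ^ (1 / c₁) * derivInv ρ (b + t) := by
    have := hE.derivInv_le_rpow_mul hN hc₁ (w' := b + t) (k := 1 + 2 ^ c₂) hv.le
      (by linarith) (by linarith) (by nlinarith)
    rwa [hψv] at this
  have hfrac : 1 / 4 ≤ t / (b + t) ∧ t / (b + t) ≤ 1 := by
    rw [div_le_div_iff₀ (by norm_num) (by linarith), div_le_one (by linarith)]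
    constructor <;> linarith
  rw [shiftDensity_eq_mul_div]
  constructor
  · calc s ≤ u := by linarith
      _ ≤ (1 + 2 ^ c₂) ^ (1 / c₁) * derivInv ρ (b + t) := hum
      _ ≤ (1 + 2 ^ c₂) ^ (1 / c₁) * (4 * (derivInv ρ (b + t) * (t / (b + t)))) := by
        gcongr; nlinarith
      _ = _ := by ring
  · calc derivInv ρ (b + t) * (t / (b + t)) ≤ derivInv ρ (b + t) :=
        mul_le_of_le_one_right hm0 hfrac.2
      _ ≤ (1 + 2 ^ c₂) ^ (1 / c₁) * u := hmu
      _ ≤ (1 + 2 ^ c₂) ^ (1 / c₁) * (2 * s) := by gcongr; linarith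
      _ = _ := by ring

lemma shiftDensity_derivInv_comparable_of_ge (hE : IsElliptic ρ c₁ c₂) (hN : IsNFunction ρ)
    (hc₁ : 0 < c₁) (hc₂ : 0 < c₂) {a s : ℝ} (hs : 0 < s) (hsa : s ≤ a) :
    s ≤ 2 * (1 + 2 ^ c₂) *
        shiftDensity (derivInv ρ) (deriv ρ a) (shiftDensity (deriv ρ) a s) ∧
      shiftDensity (derivInv ρ) (deriv ρ a) (shiftDensity (deriv ρ) a s) ≤
        (1 + 2 ^ c₂) * (1 + 2 ^ c₂) ^ (1 / c₁) * s := by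
  have hκ : 1 ≤ (2:ℝ) ^ c₂ := Real.one_le_rpow one_le_two hc₂.le
  have ha : 0 < a := hs.trans_le hsa
  have hu : 0 < a + s := by linarith
  have hb : 0 < deriv ρ a := hE.deriv_pos hN ha
  have hbv : deriv ρ a ≤ deriv ρ (a + s) :=
    (hE.strictMonoOn_deriv hN hc₁).monotoneOn (mem_Ici.2 ha.le) (mem_Ici.2 hu.le) (by linarith)
  have hvb : deriv ρ (a + s) ≤ 2 ^ c₂ * deriv ρ a := by
    have h := hE.deriv_mul_le_rpow_mul ha ((one_le_div ha).2 (by linarith : a ≤ a + s))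
    rw [div_mul_cancel₀ _ ha.ne'] at h
    refine h.trans (mul_le_mul_of_nonneg_right ?_ hb.le)
    exact Real.rpow_le_rpow (by positivity) ((div_le_iff₀ ha).2 (by linarith)) hc₂.le
  have ht : shiftDensity (deriv ρ) a s * (a + s) = deriv ρ (a + s) * s := by
    rw [shiftDensity]; field_simp
  have hψb : derivInv ρ (deriv ρ a) = a := hE.leftInvOn_derivInv hN hc₁ (mem_Ici.2 ha.le)
  set u := a + s
  set v := deriv ρ u
  set b := deriv ρ a
  set t := shiftDensity (deriv ρ) a s
  set m := derivInv ρ (b + t)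
  have ht0 : 0 ≤ t := by nlinarith
  have htv : t ≤ v := by nlinarith
  have hbt : 0 < b + t := by linarith
  have hbtκ : b + t ≤ (1 + 2 ^ c₂) * b := by linarith
  have ham : a ≤ m := hψb ▸ hE.monotoneOn_derivInv hN hc₁ (mem_Ici.2 hb.le)
    (mem_Ici.2 hbt.le) (by linarith)
  have hmP : m ≤ (1 + 2 ^ c₂) ^ (1 / c₁) * a := by
    have := hE.derivInv_le_rpow_mul hN hc₁ hbt.le hb (by linarith) hbtκ
    rwa [hψb] at this
  have hbs : b * s ≤ 2 * (a * t) := by nlinarith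
  have has : a * t ≤ 2 ^ c₂ * b * s := by nlinarith
  rw [shiftDensity, div_mul_eq_mul_div]
  constructor
  · rw [mul_div_assoc', le_div_iff₀ hbt]
    calc s * (b + t) ≤ (1 + 2 ^ c₂) * (b * s) := by nlinarith
      _ ≤ (1 + 2 ^ c₂) * (2 * (a * t)) := by gcongr
      _ ≤ (1 + 2 ^ c₂) * (2 * (m * t)) := by gcongr
      _ = _ := by ring
  · rw [div_le_iff₀ hbt]
    calc m * t ≤ (1 + 2 ^ c₂) ^ (1 / c₁) * a * t := by gcongr
      _ ≤ (1 + 2 ^ c₂) ^ (1 / c₁) * (2 ^ c₂ * b * s) := by rw [mul_assoc]; gcongr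
      _ ≤ (1 + 2 ^ c₂) ^ (1 / c₁) * ((1 + 2 ^ c₂) * (b + t) * s) := by
        gcongr
        · nlinarith
        · linarith
      _ = _ := by ring

lemma shiftDensity_derivInv_comparable (hE : IsElliptic ρ c₁ c₂) (hN : IsNFunction ρ)
    (hc₁ : 0 < c₁) (hc₂ : 0 < c₂) {a s : ℝ} (ha : 0 ≤ a) (hs : 0 < s) :
    s ≤ 4 * (1 + 2 ^ c₂) * (1 + 2 ^ c₂) ^ (1 / c₁) *
        shiftDensity (derivInv ρ) (deriv ρ a) (shiftDensity (deriv ρ) a s) ∧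
      shiftDensity (derivInv ρ) (deriv ρ a) (shiftDensity (deriv ρ) a s) ≤
        4 * (1 + 2 ^ c₂) * (1 + 2 ^ c₂) ^ (1 / c₁) * s := by
  have h2c : 0 ≤ (2:ℝ) ^ c₂ := by positivity
  have hP : 1 ≤ (1 + (2:ℝ) ^ c₂) ^ (1 / c₁) :=
    Real.one_le_rpow (by linarith) (by positivity)
  rcases le_total a s with has | hsa
  · obtain ⟨hlow, hup⟩ := hE.shiftDensity_derivInv_comparable_of_le hN hc₁ hc₂ ha hs has
    generalize shiftDensity (derivInv ρ) _ _ = J at hlow hup ⊢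
    generalize (1 + (2:ℝ) ^ c₂) ^ (1 / c₁) = P at hP hlow hup ⊢
    have hJ : 0 ≤ J := (pos_of_mul_pos_right (hs.trans_le hlow) (by positivity)).le
    constructor
    · nlinarith [mul_nonneg (mul_nonneg h2c hJ) (by linarith : 0 ≤ P)]
    · nlinarith [mul_nonneg (mul_nonneg h2c hs.le) (by linarith : 0 ≤ P)]
  · obtain ⟨hlow, hup⟩ := hE.shiftDensity_derivInv_comparable_of_ge hN hc₁ hc₂ hs hsa
    generalize shiftDensity (derivInv ρ) _ _ = J at hlow hup ⊢
    generalize (1 + (2:ℝ) ^ c₂) ^ (1 / c₁) = P at hP hlow hup ⊢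
    have hJ : 0 ≤ J := (pos_of_mul_pos_right (hs.trans_le hlow) (by positivity)).le
    have hκJ : 0 ≤ (1 + 2 ^ c₂) * J := by positivity
    constructor
    · nlinarith [mul_nonneg hκJ (by linarith : 0 ≤ P - 1)]
    · nlinarith [mul_nonneg (mul_nonneg (by linarith : 0 ≤ 1 + (2:ℝ) ^ c₂) hs.le)
        (by linarith : 0 ≤ P)]

lemma surjOn_shiftDensity_deriv (hE : IsElliptic ρ c₁ c₂) (hN : IsNFunction ρ) (hc₁ : 0 < c₁)
    {a : ℝ} (ha : 0 ≤ a) : SurjOn (shiftDensity (deriv ρ) a) (Ici 0) (Ici 0) :=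
  surjOn_shiftDensity (hE.strictMonoOn_deriv hN hc₁).monotoneOn (hE.continuousOn_deriv hN hc₁)
    hN.deriv_zero (hE.tendsto_deriv_atTop hN hc₁) ha

end IsElliptic

/-- conjugate of the shifted N-function. For an elliptic
N-function `ρ`, `(ρ_a)*(t) ∼ (ρ*)_{ρ'(a)}(t)` uniformly in `a, t ≥ 0`, with
constants depending only on the characteristics of `ρ`. -/
theorem statement9 (ρ : ℝ → ℝ) (c₁ c₂ : ℝ) (hc₁ : 0 < c₁) (hc₂ : 0 < c₂)
    (hN : IsNFunction ρ) (hE : IsElliptic ρ c₁ c₂) :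
    ∃ C > 0, ∀ a ≥ (0:ℝ), ∀ t ≥ (0:ℝ),
      conjN (shiftN ρ a) t ≤ C * shiftN (conjN ρ) (deriv ρ a) t ∧
      shiftN (conjN ρ) (deriv ρ a) t ≤ C * conjN (shiftN ρ a) t := by
  refine ⟨2 * (2 * 2 ^ (1 / c₁)) * (4 * (1 + 2 ^ c₂) * (1 + 2 ^ c₂) ^ (1 / c₁)),
    by positivity, fun a ha t ht => ?_⟩
  have hb : 0 ≤ deriv ρ a := hE.deriv_nonneg hN hc₁ ha
  exact (hE.hasSubgradientOnIci_shiftN hN hc₁ ha).conjN_comparable (shiftN_apply_zero ρ a)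
    shiftDensity_apply_zero (hE.surjOn_shiftDensity_deriv hN hc₁ ha)
    (hE.hasSubgradientOnIci_shiftN_conjN hN hc₁ hb) (shiftN_apply_zero _ _)
    shiftDensity_apply_zero (by positivity) (fun t ht => hE.shiftDensity_derivInv_le hN hc₁ hb ht)
    (by positivity) (fun s hs => hE.shiftDensity_derivInv_comparable hN hc₁ hc₂ ha hs) ht
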